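/- Suppose condition (P1') holds: for every k ∈ -ℕ, N_{k,l} converges a.s. as l → -∞ to a random variable Y_k. Suppose moreover that Y_k ∈ Σ^c a.s. for each k, where Σ^c is the set of elements of Σ having cancellative action on S. Then for any extremal solution {X,N} there exists a deterministic element x ∈ S such that X_l → x a.s. as l → -∞ and X_k = Y_k x a.s. for every k ∈ -ℕ. Moreover, unless Σ^c S := {σx : σ ∈ Σ^c, x ∈ S} is a singleton, uniqueness in law fails. -/

import Mathlib

open MeasureTheory ProbabilityTheory Filter Topology
open scoped NNReal ENNReal

universe u v w w₂

noncomputable section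

/-- The sub-σ-field generated by the process `Y` from index `k` on; since index `j : ℕ`
stands for time `-j`, this is the σ-field of the past `σ(Y_j : j ≤ -k)`. -/
def past {Ω α : Type*} [MeasurableSpace α] (Y : ℕ → Ω → α) (k : ℕ) : MeasurableSpace Ω :=
  ⨆ j ≥ k, MeasurableSpace.comap (Y j) inferInstance

/-- A solution of Tsirelson's equation with noise law `μ`.  The index `k : ℕ` stands for the
time `-k ∈ -ℕ`, so that time `k - 1` corresponds to index `k + 1`. -/
structure IsSolution {Ω S G : Type*} [MeasurableSpace Ω] [MeasurableSpace S] [MeasurableSpace G]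
    [SMul G S] (P : Measure Ω) (μ : ℕ → Measure G)
    (X : ℕ → Ω → S) (N : ℕ → Ω → G) : Prop where
  measurable_X : ∀ k, Measurable (X k)
  measurable_N : ∀ k, Measurable (N k)
  eqn : ∀ k, X k =ᵐ[P] fun ω => N k ω • X (k + 1) ω
  indep : ∀ k, Indep (MeasurableSpace.comap (N k) inferInstance)
      (past X (k + 1) ⊔ past N (k + 1)) P
  law_N : ∀ k, P.map (N k) = μ k

/-- The joint law of `(X, N)` on the path space `S^{-ℕ} × Σ^{-ℕ}`. -/
def jointLaw {Ω S G : Type*} [MeasurableSpace Ω] [MeasurableSpace S] [MeasurableSpace G]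
    (P : Measure Ω) (X : ℕ → Ω → S) (N : ℕ → Ω → G) : Measure ((ℕ → S) × (ℕ → G)) :=
  P.map fun ω => (fun k => X k ω, fun k => N k ω)

/-- A solution is strong if each `X k` is a.s. equal to a `past N k`-measurable function,
i.e. `X k` is measurable for the `P`-completion of `σ(N_j : j ≤ -k)`. -/
def IsStrong {Ω S G : Type*} [MeasurableSpace Ω] [MeasurableSpace S] [MeasurableSpace G]
    (P : Measure Ω) (X : ℕ → Ω → S) (N : ℕ → Ω → G) : Prop :=
  ∀ k, ∃ Y : Ω → S, Measurable[past N k] Y ∧ X k =ᵐ[P] Y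

/-- Triviality of the tail σ-field `⨅ k, m k`. -/
def TailTrivial {Ω : Type*} [MeasurableSpace Ω] (P : Measure Ω)
    (m : ℕ → MeasurableSpace Ω) : Prop :=
  ∀ A : Set Ω, MeasurableSet[⨅ k, m k] A → P A = 0 ∨ P A = 1

/-- Convolution `μ * ν` of a measure on the acting semigroup with a measure on the space:
the pushforward of `μ ⊗ ν` under the action map. -/
def conv {G S : Type*} [MeasurableSpace G] [MeasurableSpace S] [SMul G S]
    (μ : Measure G) (ν : Measure S) : Measure S :=
  (μ.prod ν).map fun p => p.1 • p.2

/-- Convolution of two measures on the semigroup. -/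
def convG {G : Type*} [MeasurableSpace G] [Mul G] (μ ν : Measure G) : Measure G :=
  (μ.prod ν).map fun p => p.1 * p.2

/-- `prodN N n j = N_n · N_{n+1} · ⋯ · N_{n+j}`; in the time-indexing of the paper (index `m`
is time `-m`) this is `N_{k,l}` with `k = -n` and `l = -(n+j)-1 → -∞` as `j → ∞`. -/
def prodN {Ω G : Type*} [Mul G] (N : ℕ → Ω → G) (n : ℕ) : ℕ → Ω → G
  | 0 => N n
  | j + 1 => fun ω => prodN N n j ω * N (n + j + 1) ω

/-- `convIter μ n j = μ_n * μ_{n+1} * ⋯ * μ_{n+j}`, the law analogue of `prodN`. -/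
def convIter {G : Type*} [MeasurableSpace G] [Mul G] (μ : ℕ → Measure G) (n : ℕ) :
    ℕ → Measure G
  | 0 => μ n
  | j + 1 => convG (convIter μ n j) (μ (n + j + 1))

/-- `sigPow G n` is `Σ^{n+1}`, the set of products of `n+1` elements of `Σ = G`. -/
def sigPow (G : Type*) [Mul G] : ℕ → Set G
  | 0 => Set.univ
  | n + 1 => Set.image2 (· * ·) (sigPow G n) Set.univ

/-- Two sub-σ-fields are equal up to `P`-null sets. -/
def EqModNull {Ω : Type*} [MeasurableSpace Ω] (P : Measure Ω)
    (m₁ m₂ : MeasurableSpace Ω) : Prop :=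
  (∀ A, MeasurableSet[m₁] A → ∃ B, MeasurableSet[m₂] B ∧ P (symmDiff A B) = 0) ∧
  (∀ B, MeasurableSet[m₂] B → ∃ A, MeasurableSet[m₁] A ∧ P (symmDiff A B) = 0)

end

section Context

variable {S : Type u} {G : Type v}
  [TopologicalSpace S] [CompactSpace S] [TopologicalSpace.MetrizableSpace S]
  [SecondCountableTopology S] [MeasurableSpace S] [BorelSpace S]
  [TopologicalSpace G] [CompactSpace G] [TopologicalSpace.MetrizableSpace G]
  [SecondCountableTopology G] [MeasurableSpace G] [BorelSpace G]
  [Semigroup G] [ContinuousMul G]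
  [SMul G S] [ContinuousSMul G S] [IsScalarTower G G S]

end Context

/-! Along almost every path, `X_0 = N_{0,l} X_l` with `N_{0,l} → Y_0` and `Y_0` cancellative, so by
compactness of `S` every cluster point `z` of `(X_l)` solves `X_0 = Y_0 z` and is therefore
unique: `X_l` converges, and `X_k = Y_k z` for every `k`. The limit is measurable for the tail
σ-field, hence a.s. constant on an extremal solution. For non-uniqueness, `Y_k` is a function
of the noise past `k` with `Y_k = N_k Y_{k+1}`, so for every `s ∈ S` the pair `(Y_k s, N_k)` is a
solution; two distinct values of `s` give solutions whose laws differ on `{X_0 = Y_0 s}`. -/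

open TopologicalSpace

instance IsCompletelyMetrizableSpace.of_compactSpace {X : Type*} [TopologicalSpace X]
    [CompactSpace X] [MetrizableSpace X] : IsCompletelyMetrizableSpace X := by
  let := metrizableSpaceMetric X
  infer_instance

section Past

variable {Ω α : Type*} [MeasurableSpace α] {Y : ℕ → Ω → α}

lemma measurable_past {k j : ℕ} (h : k ≤ j) : Measurable[past Y k] (Y j) :=
  measurable_iff_comap_le.2 <|
    le_iSup₂ (f := fun j (_ : j ≥ k) => MeasurableSpace.comap (Y j) inferInstance) j h

lemma past_le_of_measurable {m : MeasurableSpace Ω} {k : ℕ}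
    (hY : ∀ j ≥ k, Measurable[m] (Y j)) : past Y k ≤ m :=
  iSup₂_le fun j hj => (hY j hj).comap_le

lemma past_le [MeasurableSpace Ω] (hY : ∀ j, Measurable (Y j)) (k : ℕ) :
    past Y k ≤ ‹MeasurableSpace Ω› :=
  past_le_of_measurable fun j _ => hY j

lemma past_antitone : Antitone (past Y) := fun _ _ h =>
  past_le_of_measurable fun _ hj => measurable_past (h.trans hj)

lemma comap_past {Ω' : Type*} (Φ : Ω' → Ω) (k : ℕ) :
    (past Y k).comap Φ = past (fun j => Y j ∘ Φ) k := by
  simp only [past, MeasurableSpace.comap_iSup, MeasurableSpace.comap_comp]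

end Past

section Products

variable {Ω G : Type*} (N : ℕ → Ω → G)

lemma prodN_succ_left [Semigroup G] (n j : ℕ) (ω : Ω) :
    prodN N n (j + 1) ω = N n ω * prodN N (n + 1) j ω := by
  induction j with
  | zero => rfl
  | succ j ih =>
    show prodN N n (j + 1) ω * N (n + (j + 1) + 1) ω =
      N n ω * (prodN N (n + 1) j ω * N (n + 1 + j + 1) ω)
    rw [ih, mul_assoc, show n + (j + 1) + 1 = n + 1 + j + 1 by omega]

lemma prodN_comp [Mul G] {Ω' : Type*} (f : Ω' → Ω) (n j : ℕ) (ω : Ω') :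
    prodN (fun i => N i ∘ f) n j ω = prodN N n j (f ω) := by
  induction j with
  | zero => rfl
  | succ j ih => simp only [prodN, ih, Function.comp_apply]

lemma measurable_prodN_past [Mul G] [MeasurableSpace G] [MeasurableMul₂ G] (n j : ℕ) :
    Measurable[past N n] (prodN N n j) := by
  induction j with
  | zero => exact measurable_past le_rfl
  | succ j ih => exact ih.mul (measurable_past (by omega))

lemma tendsto_prodN_of_tendsto_prodN_succ [Semigroup G] [TopologicalSpace G] [ContinuousMul G]
    {n : ℕ} {ω : Ω} {y : G} (h : Tendsto (prodN N (n + 1) · ω) atTop (𝓝 y)) :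
    Tendsto (prodN N n · ω) atTop (𝓝 (N n ω * y)) := by
  rw [← tendsto_add_atTop_iff_nat 1]
  simpa only [prodN_succ_left] using h.const_mul (N n ω)

/-- The paper's `Y_n`; `limUnder` takes an arbitrary value where the products diverge. -/
noncomputable def limProdN [Mul G] [TopologicalSpace G] [Nonempty G] (n : ℕ) (ω : Ω) : G :=
  limUnder atTop fun j => prodN N n j ω

variable [Mul G] [TopologicalSpace G] [Nonempty G]

lemma limProdN_comp {Ω' : Type*} (f : Ω' → Ω) (n : ℕ) (ω : Ω') :
    limProdN (fun i => N i ∘ f) n ω = limProdN N n (f ω) := by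
  simp only [limProdN, prodN_comp]

variable [CompactSpace G] [MetrizableSpace G] [SecondCountableTopology G] [MeasurableSpace G]
  [BorelSpace G] [ContinuousMul G]

lemma stronglyMeasurable_limProdN (n : ℕ) : StronglyMeasurable[past N n] (limProdN N n) :=
  @StronglyMeasurable.limUnder _ _ _ (past N n) _ _ _ _ _ _ _ fun j =>
    (measurable_prodN_past N n j).stronglyMeasurable

lemma measurable_limProdN [MeasurableSpace Ω] (hN : ∀ k, Measurable (N k)) (n : ℕ) :
    Measurable (limProdN N n) :=
  ((stronglyMeasurable_limProdN N n).mono (past_le hN n)).measurable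

end Products

section Pathwise

variable {S G : Type*} [TopologicalSpace S] [T2Space S] [TopologicalSpace G] [SMul G S]
  [ContinuousSMul G S]

lemma eq_smul_of_tendsto {ι : Type*} {l : Filter ι} [l.NeBot] {a : S} {p : ι → G} {u : ι → S}
    {y : G} {z : S} (hp : Tendsto p l (𝓝 y)) (hu : Tendsto u l (𝓝 z))
    (h : ∀ i, a = p i • u i) : a = y • z :=
  tendsto_nhds_unique (tendsto_const_nhds.congr h) (hp.smul hu)

lemma exists_tendsto_of_eq_smul [CompactSpace S] [FirstCountableTopology S] {a : S}
    {p : ℕ → G} {u : ℕ → S} {y : G} (hy : ∀ s t : S, y • s = y • t → s = t)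
    (hp : Tendsto p atTop (𝓝 y)) (h : ∀ j, a = p j • u j) : ∃ z, Tendsto u atTop (𝓝 z) := by
  have hlim : ∀ z ψ, StrictMono ψ → Tendsto (u ∘ ψ) atTop (𝓝 z) → a = y • z :=
    fun z ψ hψ hz => eq_smul_of_tendsto (hp.comp hψ.tendsto_atTop) hz fun i => h (ψ i)
  obtain ⟨z, -, ψ, hψ, hz⟩ := isCompact_univ.tendsto_subseq fun j => Set.mem_univ (u j)
  refine ⟨z, isCompact_univ.tendsto_nhds_of_unique_mapClusterPt (by simp) fun z' _ hz' => ?_⟩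
  obtain ⟨ψ', hψ', hz'⟩ := hz'.tendsto_subseq
  exact hy _ _ ((hlim z' ψ' hψ' hz').symm.trans (hlim z ψ hψ hz))

lemma exists_tendsto_forall_eq_smul [CompactSpace S] [FirstCountableTopology S] {x : ℕ → S}
    {p : ℕ → ℕ → G} {y : ℕ → G} (hy : ∀ s t : S, y 0 • s = y 0 • t → s = t)
    (hp : ∀ n, Tendsto (p n) atTop (𝓝 (y n))) (hx : ∀ n j, x n = p n j • x (n + j + 1)) :
    ∃ z, Tendsto x atTop (𝓝 z) ∧ ∀ n, x n = y n • z := by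
  obtain ⟨z, hz⟩ := exists_tendsto_of_eq_smul hy (hp 0) (hx 0)
  have hxz : Tendsto x atTop (𝓝 z) := by
    rw [← tendsto_add_atTop_iff_nat 1]
    simpa only [zero_add] using hz
  refine ⟨z, hxz, fun n => eq_smul_of_tendsto (hp n) ?_ (hx n)⟩
  exact hxz.comp ((tendsto_add_atTop_nat (n + 1)).congr fun j => by omega)

end Pathwise

lemma TailTrivial.exists_ae_eq_const {Ω β : Type*} [MeasurableSpace Ω] {P : Measure Ω}
    [IsProbabilityMeasure P] {m : ℕ → MeasurableSpace Ω} (h : TailTrivial P m)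
    (hm : ⨅ k, m k ≤ ‹MeasurableSpace Ω›) [MeasurableSpace β]
    [MeasurableSpace.CountablySeparated β] [Nonempty β] {f : Ω → β}
    (hf : Measurable[⨅ k, m k] f) : ∃ c, f =ᵐ[P] Function.const Ω c :=
  exists_eventuallyEq_const_of_forall_separating MeasurableSet fun _ hU =>
    (h _ (hf hU)).symm.imp
      (fun h1 => ae_iff.2 ((prob_compl_eq_zero_iff (hm _ (hf hU))).2 h1))
      measure_eq_zero_iff_ae_notMem.1

lemma stronglyMeasurable_limUnder_past {Ω S : Type*} [TopologicalSpace S] [MetrizableSpace S]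
    [CompactSpace S] [SecondCountableTopology S] [MeasurableSpace S] [BorelSpace S] [Nonempty S]
    (X : ℕ → Ω → S) (k : ℕ) : StronglyMeasurable[past X k] fun ω => limUnder atTop (X · ω) := by
  have hshift : ∀ ω, limUnder atTop (X · ω) = limUnder atTop fun l => X (l + k) ω := fun ω => by
    rw [limUnder, limUnder, show (fun l => X (l + k) ω) = (X · ω) ∘ (· + k) from rfl,
      ← map_map, map_add_atTop_eq_nat]
  simp only [hshift]
  exact @StronglyMeasurable.limUnder _ _ _ (past X k) _ _ _ _ _ _ _ fun l =>
    (measurable_past (Nat.le_add_left k l)).stronglyMeasurable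

lemma indep_map_of_indep_comap {Ω Ω' : Type*} {m₁ m₂ : MeasurableSpace Ω'} [MeasurableSpace Ω]
    [mΩ' : MeasurableSpace Ω'] {P : Measure Ω} {Φ : Ω → Ω'} (hΦ : Measurable Φ)
    (h₁ : m₁ ≤ mΩ') (h₂ : m₂ ≤ mΩ') (h : Indep (m₁.comap Φ) (m₂.comap Φ) P) :
    Indep m₁ m₂ (P.map Φ) := by
  rw [Indep_iff] at h ⊢
  intro t₁ t₂ ht₁ ht₂
  rw [Measure.map_apply hΦ (h₁ _ ht₁), Measure.map_apply hΦ (h₂ _ ht₂),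
    Measure.map_apply hΦ ((h₁ _ ht₁).inter (h₂ _ ht₂)), Set.preimage_inter]
  exact h _ _ ⟨t₁, ht₁, rfl⟩ ⟨t₂, ht₂, rfl⟩

lemma measurable_paths {Ω S G : Type*} [MeasurableSpace Ω] [MeasurableSpace S] [MeasurableSpace G]
    {X : ℕ → Ω → S} {N : ℕ → Ω → G} (hX : ∀ k, Measurable (X k)) (hN : ∀ k, Measurable (N k)) :
    Measurable fun ω => ((fun k => X k ω, fun k => N k ω) : (ℕ → S) × (ℕ → G)) :=
  (measurable_pi_lambda _ hX).prodMk (measurable_pi_lambda _ hN)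

lemma jointLaw_apply {Ω S G : Type*} [MeasurableSpace Ω] [MeasurableSpace S] [MeasurableSpace G]
    {P : Measure Ω} {X : ℕ → Ω → S} {N : ℕ → Ω → G} (hX : ∀ k, Measurable (X k))
    (hN : ∀ k, Measurable (N k)) {A : Set ((ℕ → S) × (ℕ → G))} (hA : MeasurableSet A) :
    jointLaw P X N A = P {ω | (fun k => X k ω, fun k => N k ω) ∈ A} :=
  Measure.map_apply (measurable_paths hX hN) hA

lemma jointLaw_coord {S G : Type*} [MeasurableSpace S] [MeasurableSpace G]
    (Q : Measure ((ℕ → S) × (ℕ → G))) :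
    jointLaw Q (fun k p => p.1 k) (fun k p => p.2 k) = Q :=
  Measure.map_id

namespace IsSolution

variable {Ω S G : Type*} [MeasurableSpace Ω] [MeasurableSpace S] [MeasurableSpace G] [SMul G S]
  {P : Measure Ω} {μ : ℕ → Measure G} {X : ℕ → Ω → S} {N : ℕ → Ω → G}

lemma isProbabilityMeasure_jointLaw [IsProbabilityMeasure P] (h : IsSolution P μ X N) :
    IsProbabilityMeasure (jointLaw P X N) :=
  Measure.isProbabilityMeasure_map (measurable_paths h.measurable_X h.measurable_N).aemeasurable

lemma ae_eq_prodN_smul [Semigroup G] [IsScalarTower G G S] (h : IsSolution P μ X N) (n j : ℕ) :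
    X n =ᵐ[P] fun ω => prodN N n j ω • X (n + j + 1) ω := by
  induction j with
  | zero => exact h.eqn n
  | succ j ih =>
    filter_upwards [ih, h.eqn (n + j + 1)] with ω h₁ h₂
    rw [h₁, h₂, ← smul_assoc, smul_eq_mul]
    rfl

theorem smul_const [Semigroup G] [IsScalarTower G G S] [MeasurableSMul G S]
    (h : IsSolution P μ X N) {Z : ℕ → Ω → G} (hZ : ∀ k, Measurable[past N k] (Z k))
    (hZN : ∀ k, Z k =ᵐ[P] fun ω => N k ω * Z (k + 1) ω) (s : S) :
    IsSolution P μ (fun k ω => Z k ω • s) N where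
  measurable_X k := ((hZ k).mono (past_le h.measurable_N k) le_rfl).smul_const s
  measurable_N := h.measurable_N
  eqn k := (hZN k).mono fun ω hω => by simp only [hω, ← smul_eq_mul, smul_assoc]
  indep k := indep_of_indep_of_le_right (h.indep k) <| sup_le
    ((past_le_of_measurable fun j hj =>
      ((hZ j).mono (past_antitone hj) le_rfl).smul_const s).trans le_sup_right) le_sup_right
  law_N := h.law_N

variable [MeasurableEq S] [MeasurableSMul₂ G S]

theorem map {Ω' : Type*} [MeasurableSpace Ω'] {Φ : Ω → Ω'} (hΦ : Measurable Φ)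
    {X' : ℕ → Ω' → S} {N' : ℕ → Ω' → G} (hX' : ∀ k, Measurable (X' k))
    (hN' : ∀ k, Measurable (N' k)) (h : IsSolution P μ (fun k => X' k ∘ Φ) (fun k => N' k ∘ Φ)) :
    IsSolution (P.map Φ) μ X' N' where
  measurable_X := hX'
  measurable_N := hN'
  eqn k := (ae_map_iff (p := fun ω' => X' k ω' = N' k ω' • X' (k + 1) ω') hΦ.aemeasurable
    (measurableSet_eq_fun (hX' k) ((hN' k).smul (hX' (k + 1))))).2 (h.eqn k)
  indep k := by
    refine indep_map_of_indep_comap hΦ (hN' k).comap_le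
      (sup_le (past_le hX' _) (past_le hN' _)) ?_
    rw [MeasurableSpace.comap_sup, comap_past, comap_past, MeasurableSpace.comap_comp]
    exact h.indep k
  law_N k := by rw [Measure.map_map (hN' k) hΦ]; exact h.law_N k

theorem isSolution_jointLaw (h : IsSolution P μ X N) :
    IsSolution (jointLaw P X N) μ (fun k p => p.1 k) (fun k p => p.2 k) :=
  map (measurable_paths h.measurable_X h.measurable_N)
    (fun k => (measurable_pi_apply k).comp measurable_fst)
    (fun k => (measurable_pi_apply k).comp measurable_snd) h

end IsSolution

/-- Uniqueness in law, tested on probability spaces in `Type (max u v)`, the universe of the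
path space `S^ℕ × G^ℕ`. -/
def UniqueInLaw (S : Type u) {G : Type v} [MeasurableSpace S] [MeasurableSpace G] [SMul G S]
    (μ : ℕ → Measure G) : Prop :=
  ∀ (Ω₁ : Type (max u v)) (_ : MeasurableSpace Ω₁) (P₁ : Measure Ω₁)
    (X₁ : ℕ → Ω₁ → S) (N₁ : ℕ → Ω₁ → G)
    (Ω₂ : Type (max u v)) (_ : MeasurableSpace Ω₂) (P₂ : Measure Ω₂)
    (X₂ : ℕ → Ω₂ → S) (N₂ : ℕ → Ω₂ → G),
    IsProbabilityMeasure P₁ → IsProbabilityMeasure P₂ →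
    IsSolution P₁ μ X₁ N₁ → IsSolution P₂ μ X₂ N₂ →
    jointLaw P₁ X₁ N₁ = jointLaw P₂ X₂ N₂

namespace IsSolution

variable {Ω : Type*} {S : Type u} {G : Type v} [MeasurableSpace Ω]
  [TopologicalSpace S] [CompactSpace S] [MetrizableSpace S] [SecondCountableTopology S]
  [MeasurableSpace S] [BorelSpace S]
  [TopologicalSpace G] [MeasurableSpace G] [Semigroup G] [SMul G S] [ContinuousSMul G S]
  [IsScalarTower G G S]
  {P : Measure Ω} [IsProbabilityMeasure P] {μ : ℕ → Measure G} {X : ℕ → Ω → S} {N : ℕ → Ω → G}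
  {Y : ℕ → Ω → G}

theorem exists_ae_tendsto_const (h : IsSolution P μ X N)
    (hY : ∀ n, ∀ᵐ ω ∂P, Tendsto (fun j => prodN N n j ω) atTop (𝓝 (Y n ω)))
    (hY₀ : ∀ᵐ ω ∂P, ∀ a b : S, Y 0 ω • a = Y 0 ω • b → a = b)
    (hext : TailTrivial P fun k => past X k ⊔ past N k) :
    ∃ x : S, (∀ᵐ ω ∂P, Tendsto (fun l => X l ω) atTop (𝓝 x)) ∧
      ∀ k, X k =ᵐ[P] fun ω => Y k ω • x := by
  have hpath : ∀ᵐ ω ∂P, ∃ z, Tendsto (X · ω) atTop (𝓝 z) ∧ ∀ n, X n ω = Y n ω • z := by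
    have hX := ae_all_iff.2 fun n => ae_all_iff.2 (h.ae_eq_prodN_smul n)
    filter_upwards [ae_all_iff.2 hY, hY₀, hX] with ω hp hy hx
    exact exists_tendsto_forall_eq_smul hy hp hx
  obtain ⟨_, z₀, -⟩ := hpath.exists
  have : Nonempty S := ⟨z₀⟩
  have htail : Measurable[⨅ k, past X k ⊔ past N k] fun ω => limUnder atTop (X · ω) :=
    measurable_iff_comap_le.2 <| le_iInf fun k => measurable_iff_comap_le.1 <|
      ((stronglyMeasurable_limUnder_past X k).measurable).mono le_sup_left le_rfl
  obtain ⟨x, hx⟩ := hext.exists_ae_eq_const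
    ((iInf_le _ 0).trans (sup_le (past_le h.measurable_X 0) (past_le h.measurable_N 0))) htail
  have hlim : ∀ᵐ ω ∂P, Tendsto (X · ω) atTop (𝓝 x) ∧ ∀ n, X n ω = Y n ω • x := by
    filter_upwards [hpath, hx] with ω ⟨z, hz, hXY⟩ hxω
    rw [← show z = x from hz.limUnder_eq.symm.trans hxω]
    exact ⟨hz, hXY⟩
  exact ⟨x, hlim.mono fun _ h => h.1, fun k => hlim.mono fun _ h => h.2 k⟩

end IsSolution

section NonUniqueness

variable {Ω : Type*} {S : Type u} {G : Type v} [MeasurableSpace Ω]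
  [TopologicalSpace S] [MetrizableSpace S] [SecondCountableTopology S]
  [MeasurableSpace S] [BorelSpace S]
  [TopologicalSpace G] [CompactSpace G] [MetrizableSpace G] [SecondCountableTopology G]
  [MeasurableSpace G] [BorelSpace G] [Semigroup G] [ContinuousMul G]
  [SMul G S] [ContinuousSMul G S]
  {P : Measure Ω} [IsProbabilityMeasure P] {μ : ℕ → Measure G} {X : ℕ → Ω → S} {N : ℕ → Ω → G}

theorem jointLaw_smul_limProdN_ne [Nonempty G] (hN : ∀ k, Measurable (N k))
    (hY₀ : ∀ᵐ ω ∂P, ∀ a b : S, limProdN N 0 ω • a = limProdN N 0 ω • b → a = b)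
    {s₁ s₂ : S} (hs : s₁ ≠ s₂) :
    jointLaw P (fun k ω => limProdN N k ω • s₁) N ≠
      jointLaw P (fun k ω => limProdN N k ω • s₂) N := by
  intro heq
  have hcoord : ∀ k, Measurable fun p : (ℕ → S) × (ℕ → G) => p.2 k :=
    fun k => (measurable_pi_apply k).comp measurable_snd
  set A : Set ((ℕ → S) × (ℕ → G)) := {p | p.1 0 = limProdN (fun k p => p.2 k) 0 p • s₁}
  have hA : MeasurableSet A := measurableSet_eq_fun
    ((measurable_pi_apply 0).comp measurable_fst) ((measurable_limProdN _ hcoord 0).smul_const s₁)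
  have hcomp : ∀ s ω, limProdN (fun k (p : (ℕ → S) × (ℕ → G)) => p.2 k) 0
      (fun k => limProdN N k ω • s, fun k => N k ω) = limProdN N 0 ω := fun s ω =>
    (limProdN_comp (fun k (p : (ℕ → S) × (ℕ → G)) => p.2 k)
      (fun ω => (fun k => limProdN N k ω • s, fun k => N k ω)) 0 ω).symm
  have hlaw : ∀ s, jointLaw P (fun k ω => limProdN N k ω • s) N A =
      P {ω | limProdN N 0 ω • s = limProdN N 0 ω • s₁} := fun s => by
    rw [jointLaw_apply (fun k => (measurable_limProdN N hN k).smul_const s) hN hA]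
    simp only [A, Set.mem_ofPred_eq, hcomp]
  have h₁ : P {ω | limProdN N 0 ω • s₁ = limProdN N 0 ω • s₁} = 1 := by simp
  have h₂ : P {ω | limProdN N 0 ω • s₂ = limProdN N 0 ω • s₁} = 0 :=
    measure_eq_zero_iff_ae_notMem.2 (hY₀.mono fun ω hω heq' => hs (hω _ _ heq').symm)
  rw [← hlaw, heq, hlaw, h₂] at h₁
  exact zero_ne_one h₁

theorem IsSolution.not_uniqueInLaw [IsScalarTower G G S] [Nontrivial S] (h : IsSolution P μ X N)
    {Y : ℕ → Ω → G}
    (hY : ∀ n, ∀ᵐ ω ∂P, Tendsto (fun j => prodN N n j ω) atTop (𝓝 (Y n ω)))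
    (hY₀ : ∀ᵐ ω ∂P, ∀ a b : S, Y 0 ω • a = Y 0 ω • b → a = b) : ¬ UniqueInLaw S μ := by
  intro huniq
  obtain ⟨ω₀, -⟩ := (hY 0).exists
  have : Nonempty G := ⟨N 0 ω₀⟩
  have hZY : ∀ n, limProdN N n =ᵐ[P] Y n := fun n => (hY n).mono fun _ hω => hω.limUnder_eq
  have hZN : ∀ k, limProdN N k =ᵐ[P] fun ω => N k ω * limProdN N (k + 1) ω := fun k => by
    filter_upwards [hY (k + 1), hZY (k + 1)] with ω hω hω'
    rw [hω']
    exact (tendsto_prodN_of_tendsto_prodN_succ N hω).limUnder_eq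
  have hZ₀ : ∀ᵐ ω ∂P, ∀ a b : S, limProdN N 0 ω • a = limProdN N 0 ω • b → a = b := by
    filter_upwards [hY₀, hZY 0] with ω hω hω'
    rwa [hω']
  have hsol : ∀ s : S, IsSolution P μ (fun k ω => limProdN N k ω • s) N := fun s =>
    h.smul_const (fun k => (stronglyMeasurable_limProdN N k).measurable) hZN s
  obtain ⟨s₁, s₂, hs⟩ := exists_pair_ne S
  refine jointLaw_smul_limProdN_ne h.measurable_N hZ₀ hs ?_
  simpa only [jointLaw_coord] using huniq _ _ _ _ _ _ _ _ _ _
    (hsol s₁).isProbabilityMeasure_jointLaw (hsol s₂).isProbabilityMeasure_jointLaw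
    (hsol s₁).isSolution_jointLaw (hsol s₂).isSolution_jointLaw

end NonUniqueness

section Tsirelson

variable {S : Type u} {G : Type v}
  [TopologicalSpace S] [CompactSpace S] [TopologicalSpace.MetrizableSpace S]
  [SecondCountableTopology S] [MeasurableSpace S] [BorelSpace S]
  [TopologicalSpace G] [CompactSpace G] [TopologicalSpace.MetrizableSpace G]
  [SecondCountableTopology G] [MeasurableSpace G] [BorelSpace G]
  [Semigroup G] [ContinuousMul G]
  [SMul G S] [ContinuousSMul G S] [IsScalarTower G G S]

theorem tsirelson_P1'_cancellative_limit_general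
    {Ω : Type w} [MeasurableSpace Ω] (P : Measure Ω) [IsProbabilityMeasure P]
    (μ : ℕ → Measure G)
    (X : ℕ → Ω → S) (N : ℕ → Ω → G) (hsol : IsSolution P μ X N)
    (Y : ℕ → Ω → G)
    (hP1 : ∀ n : ℕ, ∀ᵐ ω ∂P, Tendsto (fun j => prodN N n j ω) atTop (𝓝 (Y n ω)))
    (hYc : ∀ n : ℕ, ∀ᵐ ω ∂P, Y n ω ∈ {σ : G | ∀ x y : S, σ • x = σ • y → x = y})
    (hext : TailTrivial P fun k => past X k ⊔ past N k) :
    (∃ x : S,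
      (∀ᵐ ω ∂P, Tendsto (fun l => X l ω) atTop (𝓝 x)) ∧
      ∀ k, X k =ᵐ[P] fun ω => Y k ω • x) ∧
    (¬ Set.Subsingleton
        (Set.image2 (· • ·) {σ : G | ∀ x y : S, σ • x = σ • y → x = y} (Set.univ : Set S)) →
      ¬ (∀ (Ω₁ : Type (max u v)) (_ : MeasurableSpace Ω₁) (P₁ : Measure Ω₁)
          (X₁ : ℕ → Ω₁ → S) (N₁ : ℕ → Ω₁ → G)
          (Ω₂ : Type (max u v)) (_ : MeasurableSpace Ω₂) (P₂ : Measure Ω₂)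
          (X₂ : ℕ → Ω₂ → S) (N₂ : ℕ → Ω₂ → G),
          IsProbabilityMeasure P₁ → IsProbabilityMeasure P₂ →
          IsSolution P₁ μ X₁ N₁ → IsSolution P₂ μ X₂ N₂ →
          jointLaw P₁ X₁ N₁ = jointLaw P₂ X₂ N₂)) := by
  refine ⟨hsol.exists_ae_tendsto_const hP1 (hYc 0) hext, fun himage => ?_⟩
  obtain ⟨s₁, -, s₂, -, hs⟩ := Set.not_subsingleton_iff.1 himage
  have : Nontrivial S := ⟨⟨s₁, s₂, hs⟩⟩
  exact hsol.not_uniqueInLaw hP1 (hYc 0)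

/-- Under (P1') with a.s. limits `Y_k` having cancellative action on `S`,
every extremal solution satisfies `X_l → x` a.s. as `l → -∞` for a deterministic `x ∈ S`
and `X_k = Y_k x` a.s.; moreover, unless `Σ^c S` is a singleton, uniqueness in law fails. -/
theorem tsirelson_P1'_cancellative_limit
    {Ω : Type w} [MeasurableSpace Ω] (P : Measure Ω) [IsProbabilityMeasure P]
    (μ : ℕ → Measure G) (hμ : ∀ k, IsProbabilityMeasure (μ k))
    (X : ℕ → Ω → S) (N : ℕ → Ω → G) (hsol : IsSolution P μ X N)
    (Y : ℕ → Ω → G)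
    (hP1 : ∀ n : ℕ, ∀ᵐ ω ∂P, Tendsto (fun j => prodN N n j ω) atTop (𝓝 (Y n ω)))
    (hYc : ∀ n : ℕ, ∀ᵐ ω ∂P, Y n ω ∈ {σ : G | ∀ x y : S, σ • x = σ • y → x = y})
    (hext : TailTrivial P fun k => past X k ⊔ past N k) :
    (∃ x : S,
      (∀ᵐ ω ∂P, Tendsto (fun l => X l ω) atTop (𝓝 x)) ∧
      ∀ k, X k =ᵐ[P] fun ω => Y k ω • x) ∧
    (¬ Set.Subsingleton
        (Set.image2 (· • ·) {σ : G | ∀ x y : S, σ • x = σ • y → x = y} (Set.univ : Set S)) →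
      ¬ (∀ (Ω₁ : Type (max u v)) (_ : MeasurableSpace Ω₁) (P₁ : Measure Ω₁)
          (X₁ : ℕ → Ω₁ → S) (N₁ : ℕ → Ω₁ → G)
          (Ω₂ : Type (max u v)) (_ : MeasurableSpace Ω₂) (P₂ : Measure Ω₂)
          (X₂ : ℕ → Ω₂ → S) (N₂ : ℕ → Ω₂ → G),
          IsProbabilityMeasure P₁ → IsProbabilityMeasure P₂ →
          IsSolution P₁ μ X₁ N₁ → IsSolution P₂ μ X₂ N₂ →
          jointLaw P₁ X₁ N₁ = jointLaw P₂ X₂ N₂)) :=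
  tsirelson_P1'_cancellative_limit_general P μ X N hsol Y hP1 hYc hext


end Tsirelson
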